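/- arXiv:1010.5052 — 9 statements merged into one kernel-verified Lean document; each statement's English description precedes it below -/
import Mathlib

section
/- Let V be a real inner product space of dimension 4n with inner product g, equipped with a hyperhermitian structure (J₁,J₂,J₃). Let T be a 3-form on V which is of type (1,2)+(2,1) with respect to each of J₁, J₂, J₃ and satisfies the mixed type identity. Then for every orthonormal basis (e_a)_{a=1}^{4n} of V and every X ∈ V, ∑_{a=1}^{4n} T(J₁X,e_a,J₁e_a) = ∑_{a=1}^{4n} T(J₂X,e_a,J₂e_a) = ∑_{a=1}^{4n} T(J₃X,e_a,J₃e_a). In particular, the three Lee forms θ_s(X) = −(1/2)∑_{a=1}^{4n} T(J_sX,e_a,J_se_a), s = 1,2,3, coincide. -/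
/-!
Write θ_s(X) = ∑ₐ T(J_s X, eₐ, J_s eₐ). Summing the (1,2)+(2,1) identity for J₂ at
(J₁X, eₐ, J₁eₐ) over the basis, and re-indexing two of the four sums by the orthonormal basis
(J₂eₐ), turns it into 2θ₁ − 2θ₃ = 0. The same computation for J₃ at (J₂X, eₐ, J₂eₐ) gives
θ₂ = θ₁.
-/

open scoped RealInnerProductSpace

section

variable {V ι κ : Type*} [NormedAddCommGroup V] [InnerProductSpace ℝ V] [Fintype ι] [Fintype κ]

theorem OrthonormalBasis.sum_apply_apply_eq (e : OrthonormalBasis ι ℝ V)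
    (f : OrthonormalBasis κ ℝ V) (B : V →ₗ[ℝ] V →ₗ[ℝ] ℝ) :
    ∑ i, B (e i) (e i) = ∑ a, B (f a) (f a) := by
  have expand_left : ∀ x y, B x y = ∑ i, ⟪e i, x⟫ * B (e i) y := fun x y => by
    conv_lhs => rw [← e.sum_repr' x]
    simp only [map_sum, map_smul, LinearMap.sum_apply, LinearMap.smul_apply, smul_eq_mul]
  have expand_right : ∀ x y, B x y = ∑ a, ⟪f a, y⟫ * B x (f a) := fun x y => by
    conv_lhs => rw [← f.sum_repr' y]
    simp only [map_sum, map_smul, smul_eq_mul]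
  calc ∑ i, B (e i) (e i)
      = ∑ i, ∑ a, ⟪f a, e i⟫ * B (e i) (f a) := by simp only [← expand_right]
    _ = ∑ a, B (f a) (f a) := by
        rw [Finset.sum_comm]
        simp only [expand_left (f _), real_inner_comm (f _)]

/-- Substitute the orthonormal basis `J eₐ` for `eₐ` and use `J (J eₐ) = -eₐ`. -/
theorem OrthonormalBasis.sum_apply_complexStructure (e : OrthonormalBasis ι ℝ V) {J : V →ₗ[ℝ] V}
    (hiso : ∀ X Y : V, ⟪J X, J Y⟫ = ⟪X, Y⟫) (hsq : ∀ X : V, J (J X) = -X)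
    (B : V →ₗ[ℝ] V →ₗ[ℝ] ℝ) (K : V →ₗ[ℝ] V) :
    ∑ a, B (J (e a)) (K (e a)) = -∑ a, B (e a) (K (J (e a))) := by
  let Jₑ : V ≃ₗᵢ[ℝ] V :=
    (LinearEquiv.ofLinearMap J (-J) (by ext; simp [hsq]) (by ext; simp [hsq])).isometryOfInner hiso
  have hJₑ : ∀ X, Jₑ X = J X := fun _ => rfl
  have h := e.sum_apply_apply_eq (e.map Jₑ) (B.compl₂ (-(K ∘ₗ J)))
  simp only [OrthonormalBasis.map_apply, hJₑ, LinearMap.compl₂_apply, LinearMap.neg_apply,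
    LinearMap.comp_apply, hsq, map_neg, neg_neg, Finset.sum_neg_distrib] at h
  exact h.symm

theorem sum_apply_eq_of_type12 {I J K : V →ₗ[ℝ] V}
    (hJiso : ∀ X Y : V, ⟪J X, J Y⟫ = ⟪X, Y⟫) (hJsq : ∀ X : V, J (J X) = -X)
    (hJI : ∀ X : V, J (I X) = -(K X)) (hIJ : ∀ X : V, I (J X) = K X)
    (hKJ : ∀ X : V, K (J X) = -(I X))
    (T : V →ₗ[ℝ] V →ₗ[ℝ] V →ₗ[ℝ] ℝ)
    (htype : ∀ X Y Z : V,
      T X Y Z - T (J X) (J Y) Z - T (J X) Y (J Z) - T X (J Y) (J Z) = 0)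
    (e : OrthonormalBasis ι ℝ V) (X : V) :
    ∑ a, T (I X) (e a) (I (e a)) = ∑ a, T (K X) (e a) (K (e a)) := by
  have pointwise : ∀ a, T (I X) (e a) (I (e a)) + T (K X) (J (e a)) (I (e a))
      - T (K X) (e a) (K (e a)) + T (I X) (J (e a)) (K (e a)) = 0 := fun a => by
    have h := htype (I X) (e a) (I (e a))
    simp only [hJI, map_neg, LinearMap.neg_apply] at h
    linarith
  have hK : ∑ a, T (K X) (J (e a)) (I (e a)) = -∑ a, T (K X) (e a) (K (e a)) := by
    simp only [e.sum_apply_complexStructure hJiso hJsq, hIJ]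
  have hI : ∑ a, T (I X) (J (e a)) (K (e a)) = ∑ a, T (I X) (e a) (I (e a)) := by
    simp only [e.sum_apply_complexStructure hJiso hJsq, hKJ, map_neg, Finset.sum_neg_distrib,
      neg_neg]
  have hsum := Finset.sum_congr rfl fun a (_ : a ∈ Finset.univ) => pointwise a
  simp only [Finset.sum_add_distrib, Finset.sum_sub_distrib, Finset.sum_const_zero] at hsum
  linarith

end

theorem stmt_0_general
    {V : Type*} [NormedAddCommGroup V] [InnerProductSpace ℝ V]
    {n : ℕ}
    (J₁ J₂ J₃ : V →ₗ[ℝ] V)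
    (hJ₂iso : ∀ X Y : V, ⟪J₂ X, J₂ Y⟫ = ⟪X, Y⟫)
    (hJ₃iso : ∀ X Y : V, ⟪J₃ X, J₃ Y⟫ = ⟪X, Y⟫)
    (hJ₁sq : ∀ X : V, J₁ (J₁ X) = -X)
    (hJ₂sq : ∀ X : V, J₂ (J₂ X) = -X)
    (hJ₃sq : ∀ X : V, J₃ (J₃ X) = -X)
    (hJ₁₂ : ∀ X : V, J₁ (J₂ X) = J₃ X)
    (hJ₂₁ : ∀ X : V, J₂ (J₁ X) = -(J₃ X))
    (T : V →ₗ[ℝ] V →ₗ[ℝ] V →ₗ[ℝ] ℝ)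
    (htype₂ : ∀ X Y Z : V,
      T X Y Z - T (J₂ X) (J₂ Y) Z - T (J₂ X) Y (J₂ Z) - T X (J₂ Y) (J₂ Z) = 0)
    (htype₃ : ∀ X Y Z : V,
      T X Y Z - T (J₃ X) (J₃ Y) Z - T (J₃ X) Y (J₃ Z) - T X (J₃ Y) (J₃ Z) = 0)
    (e : OrthonormalBasis (Fin (4 * n)) ℝ V) (X : V) :
    ((∑ a, T (J₁ X) (e a) (J₁ (e a)) = ∑ a, T (J₂ X) (e a) (J₂ (e a))) ∧
      (∑ a, T (J₂ X) (e a) (J₂ (e a)) = ∑ a, T (J₃ X) (e a) (J₃ (e a)))) ∧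
    ((-(1 / 2 : ℝ)) * ∑ a, T (J₁ X) (e a) (J₁ (e a)) =
        (-(1 / 2 : ℝ)) * ∑ a, T (J₂ X) (e a) (J₂ (e a)) ∧
      (-(1 / 2 : ℝ)) * ∑ a, T (J₂ X) (e a) (J₂ (e a)) =
        (-(1 / 2 : ℝ)) * ∑ a, T (J₃ X) (e a) (J₃ (e a))) := by
  have hJ₃₂ : ∀ X : V, J₃ (J₂ X) = -(J₁ X) := fun X => by
    rw [← hJ₁₂, hJ₂sq, map_neg]
  have hJ₂₃ : ∀ X : V, J₂ (J₃ X) = J₁ X := fun X => by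
    rw [← hJ₁₂, hJ₂₁, hJ₃₂, neg_neg]
  have hJ₁₃ : ∀ X : V, J₁ (J₃ X) = -(J₂ X) := fun X => by
    rw [← hJ₁₂, hJ₁sq]
  have h₁₃ := sum_apply_eq_of_type12 hJ₂iso hJ₂sq hJ₂₁ hJ₁₂ hJ₃₂ T htype₂ e X
  have h₂₁ := sum_apply_eq_of_type12 hJ₃iso hJ₃sq hJ₃₂ hJ₂₃ hJ₁₃ T htype₃ e X
  exact ⟨⟨h₂₁.symm, h₂₁.trans h₁₃⟩, by rw [h₂₁], by rw [h₂₁, h₁₃]⟩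

theorem stmt_0
    {V : Type*} [NormedAddCommGroup V] [InnerProductSpace ℝ V]
    [FiniteDimensional ℝ V] {n : ℕ}
    (hdim : Module.finrank ℝ V = 4 * n)
    (J₁ J₂ J₃ : V →ₗ[ℝ] V)
    (hJ₁iso : ∀ X Y : V, ⟪J₁ X, J₁ Y⟫ = ⟪X, Y⟫)
    (hJ₂iso : ∀ X Y : V, ⟪J₂ X, J₂ Y⟫ = ⟪X, Y⟫)
    (hJ₃iso : ∀ X Y : V, ⟪J₃ X, J₃ Y⟫ = ⟪X, Y⟫)
    (hJ₁sq : ∀ X : V, J₁ (J₁ X) = -X)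
    (hJ₂sq : ∀ X : V, J₂ (J₂ X) = -X)
    (hJ₃sq : ∀ X : V, J₃ (J₃ X) = -X)
    (hJ₁₂ : ∀ X : V, J₁ (J₂ X) = J₃ X)
    (hJ₂₁ : ∀ X : V, J₂ (J₁ X) = -(J₃ X))
    (T : V →ₗ[ℝ] V →ₗ[ℝ] V →ₗ[ℝ] ℝ)
    (halt₁ : ∀ X Y Z : V, T X Y Z = -(T Y X Z))
    (halt₂ : ∀ X Y Z : V, T X Y Z = -(T X Z Y))
    (htype₁ : ∀ X Y Z : V,
      T X Y Z - T (J₁ X) (J₁ Y) Z - T (J₁ X) Y (J₁ Z) - T X (J₁ Y) (J₁ Z) = 0)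
    (htype₂ : ∀ X Y Z : V,
      T X Y Z - T (J₂ X) (J₂ Y) Z - T (J₂ X) Y (J₂ Z) - T X (J₂ Y) (J₂ Z) = 0)
    (htype₃ : ∀ X Y Z : V,
      T X Y Z - T (J₃ X) (J₃ Y) Z - T (J₃ X) Y (J₃ Z) - T X (J₃ Y) (J₃ Z) = 0)
    (hmix₁ : ∀ X Y Z : V,
      T (J₁ X) (J₁ Y) Z - T (J₃ X) (J₃ Y) Z - T (J₃ X) (J₁ Y) (J₂ Z) - T (J₁ X) (J₃ Y) (J₂ Z) = 0)
    (hmix₂ : ∀ X Y Z : V,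
      T (J₂ X) (J₂ Y) Z - T (J₁ X) (J₁ Y) Z - T (J₁ X) (J₂ Y) (J₃ Z) - T (J₂ X) (J₁ Y) (J₃ Z) = 0)
    (hmix₃ : ∀ X Y Z : V,
      T (J₃ X) (J₃ Y) Z - T (J₂ X) (J₂ Y) Z - T (J₂ X) (J₃ Y) (J₁ Z) - T (J₃ X) (J₂ Y) (J₁ Z) = 0)
    (e : OrthonormalBasis (Fin (4 * n)) ℝ V) (X : V) :
    ((∑ a, T (J₁ X) (e a) (J₁ (e a)) = ∑ a, T (J₂ X) (e a) (J₂ (e a))) ∧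
      (∑ a, T (J₂ X) (e a) (J₂ (e a)) = ∑ a, T (J₃ X) (e a) (J₃ (e a)))) ∧
    ((-(1 / 2 : ℝ)) * ∑ a, T (J₁ X) (e a) (J₁ (e a)) =
        (-(1 / 2 : ℝ)) * ∑ a, T (J₂ X) (e a) (J₂ (e a)) ∧
      (-(1 / 2 : ℝ)) * ∑ a, T (J₂ X) (e a) (J₂ (e a)) =
        (-(1 / 2 : ℝ)) * ∑ a, T (J₃ X) (e a) (J₃ (e a))) :=
  stmt_0_general J₁ J₂ J₃ hJ₂iso hJ₃iso hJ₁sq hJ₂sq hJ₃sq hJ₁₂ hJ₂₁ T htype₂ htype₃ e X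
end

section
/- Let V be a real inner product space of dimension 4n with inner product g, equipped with a hyperhermitian structure (J₁,J₂,J₃). Let T be a 3-form on V which is of type (1,2)+(2,1) with respect to each of J₁, J₂, J₃ and satisfies the mixed type identity. Let T̂ : V×V → V be the vector-valued form determined by g(T̂(X,Y),Z) = T(X,Y,Z) for all Z, and define B : V×V → V by −4B(X,Y) = T̂(X,Y) − J₁T̂(X,J₁Y) − J₂T̂(X,J₂Y) − J₃T̂(X,J₃Y) + T̂(J₁X,J₁Y) + J₁T̂(J₁X,Y) − J₂T̂(J₁X,J₃Y) + J₃T̂(J₁X,J₂Y). Then for all X,Y,Z ∈ V one has g(B(X,Y),Z) = A(X,Y,Z), where A is the difference tensor defined by 2A(X,Y,Z) = −T(X,J₁Y,J₁Z) − T(J₁X,J₁Y,Z) − T(X,J₃Y,J₃Z) − T(J₁X,J₃Y,J₂Z). -/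
/-! Since each `J_s` is an isometry squaring to `-1`, it is skew-adjoint, so pairing `B(X,Y)` with
`Z` turns `-4 g(B(X,Y),Z)` into a sum of eight values of `T`. Its difference with `-4 A(X,Y,Z)` is
the sum of the `(1,2)+(2,1)` condition for `J₁` at `(X,Y,Z)` and at `(X,J₂Y,J₂Z)`, because
`J₁J₂ = J₃`. -/

open scoped InnerProductSpace RealInnerProductSpace

theorem inner_apply_eq_neg_inner_apply {𝕜 E : Type*} [RCLike 𝕜] [SeminormedAddCommGroup E]
    [InnerProductSpace 𝕜 E] {J : E → E} (hiso : ∀ x y, ⟪J x, J y⟫_𝕜 = ⟪x, y⟫_𝕜)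
    (hsq : ∀ x, J (J x) = -x) (x y : E) : ⟪J x, y⟫_𝕜 = -⟪x, J y⟫_𝕜 :=
  calc ⟪J x, y⟫_𝕜 = -⟪J x, J (J y)⟫_𝕜 := by rw [hsq, inner_neg_right, neg_neg]
    _ = -⟪x, J y⟫_𝕜 := by rw [hiso]

theorem stmt_1_general
    {V : Type*} [NormedAddCommGroup V] [InnerProductSpace ℝ V]
    (J₁ J₂ J₃ : V →ₗ[ℝ] V)
    (hJ₁iso : ∀ X Y : V, ⟪J₁ X, J₁ Y⟫ = ⟪X, Y⟫)
    (hJ₂iso : ∀ X Y : V, ⟪J₂ X, J₂ Y⟫ = ⟪X, Y⟫)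
    (hJ₃iso : ∀ X Y : V, ⟪J₃ X, J₃ Y⟫ = ⟪X, Y⟫)
    (hJ₁sq : ∀ X : V, J₁ (J₁ X) = -X)
    (hJ₂sq : ∀ X : V, J₂ (J₂ X) = -X)
    (hJ₃sq : ∀ X : V, J₃ (J₃ X) = -X)
    (hJ₁₂ : ∀ X : V, J₁ (J₂ X) = J₃ X)
    (T : V →ₗ[ℝ] V →ₗ[ℝ] V →ₗ[ℝ] ℝ)
    (htype₁ : ∀ X Y Z : V,
      T X Y Z - T (J₁ X) (J₁ Y) Z - T (J₁ X) Y (J₁ Z) - T X (J₁ Y) (J₁ Z) = 0)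
    (That : V →ₗ[ℝ] V →ₗ[ℝ] V)
    (hThat : ∀ X Y Z : V, ⟪That X Y, Z⟫ = T X Y Z)
    (B : V → V → V)
    (hB : ∀ X Y : V,
      (-4 : ℝ) • B X Y =
        That X Y - J₁ (That X (J₁ Y)) - J₂ (That X (J₂ Y)) - J₃ (That X (J₃ Y))
          + That (J₁ X) (J₁ Y) + J₁ (That (J₁ X) Y) - J₂ (That (J₁ X) (J₃ Y))
          + J₃ (That (J₁ X) (J₂ Y)))
    (A : V → V → V → ℝ)
    (hA : ∀ X Y Z : V,
      2 * A X Y Z =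
        -(T X (J₁ Y) (J₁ Z)) - T (J₁ X) (J₁ Y) Z - T X (J₃ Y) (J₃ Z) - T (J₁ X) (J₃ Y) (J₂ Z))
    : ∀ X Y Z : V, ⟪B X Y, Z⟫ = A X Y Z := by
  intro X Y Z
  have hBZ : -4 * ⟪B X Y, Z⟫ =
      T X Y Z + T X (J₁ Y) (J₁ Z) + T X (J₂ Y) (J₂ Z) + T X (J₃ Y) (J₃ Z)
        + T (J₁ X) (J₁ Y) Z - T (J₁ X) Y (J₁ Z) + T (J₁ X) (J₃ Y) (J₂ Z)
        - T (J₁ X) (J₂ Y) (J₃ Z) := by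
    rw [← real_inner_smul_left, hB]
    simp only [inner_add_left, inner_sub_left, inner_apply_eq_neg_inner_apply hJ₁iso hJ₁sq,
      inner_apply_eq_neg_inner_apply hJ₂iso hJ₂sq, inner_apply_eq_neg_inner_apply hJ₃iso hJ₃sq,
      hThat]
    ring
  have htype_J₂ := htype₁ X (J₂ Y) (J₂ Z)
  rw [hJ₁₂, hJ₁₂] at htype_J₂
  linear_combination (-1 / 4 : ℝ) * (hBZ + htype₁ X Y Z + htype_J₂) - (1 / 2 : ℝ) * hA X Y Z

theorem stmt_1
    {V : Type*} [NormedAddCommGroup V] [InnerProductSpace ℝ V]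
    [FiniteDimensional ℝ V] {n : ℕ}
    (hdim : Module.finrank ℝ V = 4 * n)
    (J₁ J₂ J₃ : V →ₗ[ℝ] V)
    (hJ₁iso : ∀ X Y : V, ⟪J₁ X, J₁ Y⟫ = ⟪X, Y⟫)
    (hJ₂iso : ∀ X Y : V, ⟪J₂ X, J₂ Y⟫ = ⟪X, Y⟫)
    (hJ₃iso : ∀ X Y : V, ⟪J₃ X, J₃ Y⟫ = ⟪X, Y⟫)
    (hJ₁sq : ∀ X : V, J₁ (J₁ X) = -X)
    (hJ₂sq : ∀ X : V, J₂ (J₂ X) = -X)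
    (hJ₃sq : ∀ X : V, J₃ (J₃ X) = -X)
    (hJ₁₂ : ∀ X : V, J₁ (J₂ X) = J₃ X)
    (hJ₂₁ : ∀ X : V, J₂ (J₁ X) = -(J₃ X))
    (T : V →ₗ[ℝ] V →ₗ[ℝ] V →ₗ[ℝ] ℝ)
    (halt₁ : ∀ X Y Z : V, T X Y Z = -(T Y X Z))
    (halt₂ : ∀ X Y Z : V, T X Y Z = -(T X Z Y))
    (htype₁ : ∀ X Y Z : V,
      T X Y Z - T (J₁ X) (J₁ Y) Z - T (J₁ X) Y (J₁ Z) - T X (J₁ Y) (J₁ Z) = 0)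
    (htype₂ : ∀ X Y Z : V,
      T X Y Z - T (J₂ X) (J₂ Y) Z - T (J₂ X) Y (J₂ Z) - T X (J₂ Y) (J₂ Z) = 0)
    (htype₃ : ∀ X Y Z : V,
      T X Y Z - T (J₃ X) (J₃ Y) Z - T (J₃ X) Y (J₃ Z) - T X (J₃ Y) (J₃ Z) = 0)
    (hmix₁ : ∀ X Y Z : V,
      T (J₁ X) (J₁ Y) Z - T (J₃ X) (J₃ Y) Z - T (J₃ X) (J₁ Y) (J₂ Z) - T (J₁ X) (J₃ Y) (J₂ Z) = 0)
    (hmix₂ : ∀ X Y Z : V,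
      T (J₂ X) (J₂ Y) Z - T (J₁ X) (J₁ Y) Z - T (J₁ X) (J₂ Y) (J₃ Z) - T (J₂ X) (J₁ Y) (J₃ Z) = 0)
    (hmix₃ : ∀ X Y Z : V,
      T (J₃ X) (J₃ Y) Z - T (J₂ X) (J₂ Y) Z - T (J₂ X) (J₃ Y) (J₁ Z) - T (J₃ X) (J₂ Y) (J₁ Z) = 0)
    (That : V →ₗ[ℝ] V →ₗ[ℝ] V)
    (hThat : ∀ X Y Z : V, ⟪That X Y, Z⟫ = T X Y Z)
    (B : V → V → V)
    (hB : ∀ X Y : V,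
      (-4 : ℝ) • B X Y =
        That X Y - J₁ (That X (J₁ Y)) - J₂ (That X (J₂ Y)) - J₃ (That X (J₃ Y))
          + That (J₁ X) (J₁ Y) + J₁ (That (J₁ X) Y) - J₂ (That (J₁ X) (J₃ Y))
          + J₃ (That (J₁ X) (J₂ Y)))
    (A : V → V → V → ℝ)
    (hA : ∀ X Y Z : V,
      2 * A X Y Z =
        -(T X (J₁ Y) (J₁ Z)) - T (J₁ X) (J₁ Y) Z - T X (J₃ Y) (J₃ Z) - T (J₁ X) (J₃ Y) (J₂ Z))
    : ∀ X Y Z : V, ⟪B X Y, Z⟫ = A X Y Z :=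
  stmt_1_general J₁ J₂ J₃ hJ₁iso hJ₂iso hJ₃iso hJ₁sq hJ₂sq hJ₃sq hJ₁₂ T htype₁ That hThat B hB A hA
end

section
/- Let V be a real inner product space of dimension 4n with inner product g, equipped with a hyperhermitian structure (J₁,J₂,J₃). Let T be a 3-form on V which is of type (1,2)+(2,1) with respect to each of J₁, J₂, J₃ and satisfies the mixed type identity, let (e_a)_{a=1}^{4n} be an orthonormal basis of V, let θ(X) = −(1/2)∑_{a=1}^{4n} T(J₁X,e_a,J₁e_a) be the Lee form, and let A be the difference tensor defined by 2A(X,Y,Z) = −T(X,J₁Y,J₁Z) − T(J₁X,J₁Y,Z) − T(X,J₃Y,J₃Z) − T(J₁X,J₃Y,J₂Z). Then for every X ∈ V, ∑_{a=1}^{4n} A(X,e_a,e_a) = −2θ(X). -/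
/-!
The terms `T(X, J₁Y, J₁Y)` and `T(X, J₃Y, J₃Y)` of `2A(X,Y,Y)` vanish by skew-symmetry, so the
trace of `A` reduces to `∑ T(J₁X, e_a, J₁e_a) - ∑ T(J₁X, J₃e_a, J₂e_a)`. Moving the skew-adjoint
`J₂` across the trace and using `J₃J₂ = -J₁` turns the second sum into minus the first, which is
`-2θ(X)`.
-/

open scoped RealInnerProductSpace

section

variable {V : Type*} [NormedAddCommGroup V] [InnerProductSpace ℝ V]

theorem OrthonormalBasis.sum_inner_mul_apply {ι : Type*} [Fintype ι]
    (e : OrthonormalBasis ι ℝ V) (f : V →ₗ[ℝ] ℝ) (x : V) :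
    ∑ i, ⟪e i, x⟫ * f (e i) = f x := by
  conv_rhs => rw [← e.sum_repr' x]
  simp only [map_sum, map_smul, smul_eq_mul]

theorem inner_apply_left_eq_neg_of_isometry_of_sq_eq_neg (J : V →ₗ[ℝ] V)
    (hiso : ∀ x y : V, ⟪J x, J y⟫ = ⟪x, y⟫) (hsq : ∀ x : V, J (J x) = -x) (x y : V) :
    ⟪J x, y⟫ = -⟪x, J y⟫ := by
  rw [← hiso (J x), hsq, inner_neg_left]

theorem OrthonormalBasis.sum_apply_map_eq_neg_sum_map_apply {ι : Type*} [Fintype ι]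
    (e : OrthonormalBasis ι ℝ V) (B : V →ₗ[ℝ] V →ₗ[ℝ] ℝ) (S : V →ₗ[ℝ] V)
    (hS : ∀ x y : V, ⟪S x, y⟫ = -⟪x, S y⟫) :
    ∑ i, B (e i) (S (e i)) = -∑ j, B (S (e j)) (e j) := by
  calc ∑ i, B (e i) (S (e i))
      = ∑ i, ∑ j, ⟪e j, S (e i)⟫ * B (e i) (e j) := by
        simp only [e.sum_inner_mul_apply]
    _ = -∑ j, ∑ i, ⟪e i, S (e j)⟫ * B.flip (e j) (e i) := by
        rw [Finset.sum_comm, ← Finset.sum_neg_distrib]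
        refine Finset.sum_congr rfl fun j _ => ?_
        rw [← Finset.sum_neg_distrib]
        refine Finset.sum_congr rfl fun i _ => ?_
        rw [real_inner_comm, ← neg_neg ⟪S (e i), e j⟫, hS, real_inner_comm, neg_neg, hS,
          LinearMap.flip_apply, neg_mul]
    _ = -∑ j, B (S (e j)) (e j) := by
        rw [Finset.sum_congr rfl fun j _ => e.sum_inner_mul_apply (B.flip (e j)) (S (e j))]
        rfl

end

theorem stmt_2_general
    {V : Type*} [NormedAddCommGroup V] [InnerProductSpace ℝ V]
    {n : ℕ}
    (J₁ J₂ J₃ : V →ₗ[ℝ] V)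
    (hJ₂iso : ∀ X Y : V, ⟪J₂ X, J₂ Y⟫ = ⟪X, Y⟫)
    (hJ₂sq : ∀ X : V, J₂ (J₂ X) = -X)
    (hJ₁₂ : ∀ X : V, J₁ (J₂ X) = J₃ X)
    (T : V →ₗ[ℝ] V →ₗ[ℝ] V →ₗ[ℝ] ℝ)
    (halt₂ : ∀ X Y Z : V, T X Y Z = -(T X Z Y))
    (e : OrthonormalBasis (Fin (4 * n)) ℝ V)
    (θ : V → ℝ)
    (hθ : ∀ X : V, θ X = -(1 / 2 : ℝ) * ∑ a, T (J₁ X) (e a) (J₁ (e a)))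
    (A : V → V → V → ℝ)
    (hA : ∀ X Y Z : V,
      2 * A X Y Z =
        -(T X (J₁ Y) (J₁ Z)) - T (J₁ X) (J₁ Y) Z - T X (J₃ Y) (J₃ Z) - T (J₁ X) (J₃ Y) (J₂ Z))
    (X : V) :
    ∑ a, A X (e a) (e a) = -2 * θ X := by
  have hT_self : ∀ W Y : V, T W Y Y = 0 := fun W Y => by linarith [halt₂ W Y Y]
  have hJ₃₂ : ∀ Y : V, J₃ (J₂ Y) = -J₁ Y := fun Y => by rw [← hJ₁₂, hJ₂sq, map_neg]
  have hsummand : ∀ a, 2 * A X (e a) (e a) =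
      T (J₁ X) (e a) (J₁ (e a)) - T (J₁ X) (J₃ (e a)) (J₂ (e a)) := fun a => by
    rw [hA, hT_self, hT_self, halt₂ (J₁ X) (J₁ (e a))]
    ring
  have htrace : ∑ a, T (J₁ X) (J₃ (e a)) (J₂ (e a)) = -∑ a, T (J₁ X) (e a) (J₁ (e a)) := by
    have hmove := e.sum_apply_map_eq_neg_sum_map_apply ((T (J₁ X)).comp J₃) J₂
      (inner_apply_left_eq_neg_of_isometry_of_sq_eq_neg J₂ hJ₂iso hJ₂sq)
    simp only [LinearMap.comp_apply, hJ₃₂, map_neg, LinearMap.neg_apply] at hmove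
    simp only [hmove, halt₂ (J₁ X) (J₁ _), neg_neg]
  have hsum : 2 * ∑ a, A X (e a) (e a) = 2 * ∑ a, T (J₁ X) (e a) (J₁ (e a)) := by
    rw [Finset.mul_sum, Finset.sum_congr rfl fun a _ => hsummand a, Finset.sum_sub_distrib,
      htrace]
    ring
  rw [hθ]
  linarith

theorem stmt_2
    {V : Type*} [NormedAddCommGroup V] [InnerProductSpace ℝ V]
    [FiniteDimensional ℝ V] {n : ℕ}
    (hdim : Module.finrank ℝ V = 4 * n)
    (J₁ J₂ J₃ : V →ₗ[ℝ] V)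
    (hJ₁iso : ∀ X Y : V, ⟪J₁ X, J₁ Y⟫ = ⟪X, Y⟫)
    (hJ₂iso : ∀ X Y : V, ⟪J₂ X, J₂ Y⟫ = ⟪X, Y⟫)
    (hJ₃iso : ∀ X Y : V, ⟪J₃ X, J₃ Y⟫ = ⟪X, Y⟫)
    (hJ₁sq : ∀ X : V, J₁ (J₁ X) = -X)
    (hJ₂sq : ∀ X : V, J₂ (J₂ X) = -X)
    (hJ₃sq : ∀ X : V, J₃ (J₃ X) = -X)
    (hJ₁₂ : ∀ X : V, J₁ (J₂ X) = J₃ X)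
    (hJ₂₁ : ∀ X : V, J₂ (J₁ X) = -(J₃ X))
    (T : V →ₗ[ℝ] V →ₗ[ℝ] V →ₗ[ℝ] ℝ)
    (halt₁ : ∀ X Y Z : V, T X Y Z = -(T Y X Z))
    (halt₂ : ∀ X Y Z : V, T X Y Z = -(T X Z Y))
    (htype₁ : ∀ X Y Z : V,
      T X Y Z - T (J₁ X) (J₁ Y) Z - T (J₁ X) Y (J₁ Z) - T X (J₁ Y) (J₁ Z) = 0)
    (htype₂ : ∀ X Y Z : V,
      T X Y Z - T (J₂ X) (J₂ Y) Z - T (J₂ X) Y (J₂ Z) - T X (J₂ Y) (J₂ Z) = 0)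
    (htype₃ : ∀ X Y Z : V,
      T X Y Z - T (J₃ X) (J₃ Y) Z - T (J₃ X) Y (J₃ Z) - T X (J₃ Y) (J₃ Z) = 0)
    (hmix₁ : ∀ X Y Z : V,
      T (J₁ X) (J₁ Y) Z - T (J₃ X) (J₃ Y) Z - T (J₃ X) (J₁ Y) (J₂ Z) - T (J₁ X) (J₃ Y) (J₂ Z) = 0)
    (hmix₂ : ∀ X Y Z : V,
      T (J₂ X) (J₂ Y) Z - T (J₁ X) (J₁ Y) Z - T (J₁ X) (J₂ Y) (J₃ Z) - T (J₂ X) (J₁ Y) (J₃ Z) = 0)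
    (hmix₃ : ∀ X Y Z : V,
      T (J₃ X) (J₃ Y) Z - T (J₂ X) (J₂ Y) Z - T (J₂ X) (J₃ Y) (J₁ Z) - T (J₃ X) (J₂ Y) (J₁ Z) = 0)
    (e : OrthonormalBasis (Fin (4 * n)) ℝ V)
    (θ : V → ℝ)
    (hθ : ∀ X : V, θ X = -(1 / 2 : ℝ) * ∑ a, T (J₁ X) (e a) (J₁ (e a)))
    (A : V → V → V → ℝ)
    (hA : ∀ X Y Z : V,
      2 * A X Y Z =
        -(T X (J₁ Y) (J₁ Z)) - T (J₁ X) (J₁ Y) Z - T X (J₃ Y) (J₃ Z) - T (J₁ X) (J₃ Y) (J₂ Z))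
    (X : V) :
    ∑ a, A X (e a) (e a) = -2 * θ X :=
  stmt_2_general J₁ J₂ J₃ hJ₂iso hJ₂sq hJ₁₂ T halt₂ e θ hθ A hA X
end

section
/- Let V be a real inner product space of dimension 4n with inner product g, equipped with a hyperhermitian structure (J₁,J₂,J₃). Let T be a 3-form on V which is of type (1,2)+(2,1) with respect to each of J₁, J₂, J₃ and satisfies the mixed type identity, let (e_a)_{a=1}^{4n} be an orthonormal basis of V, and let A be the difference tensor defined by 2A(X,Y,Z) = −T(X,J₁Y,J₁Z) − T(J₁X,J₁Y,Z) − T(X,J₃Y,J₃Z) − T(J₁X,J₃Y,J₂Z). Then for every X ∈ V, ∑_{a=1}^{4n} A(X,e_a,J₁e_a) = 0. -/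
/-!
After the quaternion relations are used, the summand `2 A(X, e_a, J₁ e_a)` becomes
`T(X, J₁ e_a, e_a) - T(X, J₁ f_a, f_a)` with `f_a = J₂ e_a`. Since `J₂` is an isometry, `(f_a)` is
again an orthonormal basis, and the trace `∑ B(u_a, u_a)` of a bilinear form does not depend on the
orthonormal basis `(u_a)`, so the two sums cancel.
-/

open scoped RealInnerProductSpace

namespace OrthonormalBasis

variable {V ι κ : Type*} [NormedAddCommGroup V] [InnerProductSpace ℝ V] [Fintype ι] [Fintype κ]

theorem sum_bilin_self_eq (e : OrthonormalBasis ι ℝ V) (f : OrthonormalBasis κ ℝ V)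
    (B : V →ₗ[ℝ] V →ₗ[ℝ] ℝ) :
    ∑ i, B (e i) (e i) = ∑ j, B (f j) (f j) :=
  calc ∑ i, B (e i) (e i) = ∑ i, B (∑ j, ⟪f j, e i⟫ • f j) (e i) := by
        simp only [f.sum_repr']
    _ = ∑ j, B (f j) (∑ i, ⟪e i, f j⟫ • e i) := by
        simp only [map_sum, map_smul, LinearMap.coe_sum, Finset.sum_apply, LinearMap.smul_apply,
          smul_eq_mul, real_inner_comm (e _)]
        exact Finset.sum_comm
    _ = ∑ j, B (f j) (f j) := by simp only [e.sum_repr']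

end OrthonormalBasis

section Hypercomplex

variable {V : Type*} [AddCommGroup V] [Module ℝ V] {J₁ J₂ J₃ : V →ₗ[ℝ] V}

theorem apply_J₁_eq_J₂ (hJ₁sq : ∀ X : V, J₁ (J₁ X) = -X) (hJ₁₂ : ∀ X : V, J₁ (J₂ X) = J₃ X)
    (hJ₂₁ : ∀ X : V, J₂ (J₁ X) = -(J₃ X)) (Y : V) :
    J₃ (J₁ Y) = J₂ Y := by
  rw [← hJ₁₂, hJ₂₁, map_neg, ← hJ₁₂, hJ₁sq, neg_neg]

theorem two_mul_apply_J₁_self_eq (hJ₁sq : ∀ X : V, J₁ (J₁ X) = -X)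
    (hJ₁₂ : ∀ X : V, J₁ (J₂ X) = J₃ X) (hJ₂₁ : ∀ X : V, J₂ (J₁ X) = -(J₃ X))
    (T : V →ₗ[ℝ] V →ₗ[ℝ] V →ₗ[ℝ] ℝ) (halt₂ : ∀ X Y Z : V, T X Y Z = -(T X Z Y))
    (A : V → V → V → ℝ)
    (hA : ∀ X Y Z : V,
      2 * A X Y Z =
        -(T X (J₁ Y) (J₁ Z)) - T (J₁ X) (J₁ Y) Z - T X (J₃ Y) (J₃ Z) - T (J₁ X) (J₃ Y) (J₂ Z))
    (X Y : V) :
    2 * A X Y (J₁ Y) = T X (J₁ Y) Y - T X (J₁ (J₂ Y)) (J₂ Y) := by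
  have hT_self : ∀ X Y : V, T X Y Y = 0 := fun X Y => by linarith [halt₂ X Y Y]
  rw [hA, hJ₁sq, apply_J₁_eq_J₂ hJ₁sq hJ₁₂ hJ₂₁, hJ₂₁, hJ₁₂, map_neg, map_neg, hT_self,
    hT_self]
  ring

end Hypercomplex

theorem stmt_3_general
    {V : Type*} [NormedAddCommGroup V] [InnerProductSpace ℝ V]
    {n : ℕ}
    (J₁ J₂ J₃ : V →ₗ[ℝ] V)
    (hJ₂iso : ∀ X Y : V, ⟪J₂ X, J₂ Y⟫ = ⟪X, Y⟫)
    (hJ₁sq : ∀ X : V, J₁ (J₁ X) = -X)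
    (hJ₂sq : ∀ X : V, J₂ (J₂ X) = -X)
    (hJ₁₂ : ∀ X : V, J₁ (J₂ X) = J₃ X)
    (hJ₂₁ : ∀ X : V, J₂ (J₁ X) = -(J₃ X))
    (T : V →ₗ[ℝ] V →ₗ[ℝ] V →ₗ[ℝ] ℝ)
    (halt₂ : ∀ X Y Z : V, T X Y Z = -(T X Z Y))
    (e : OrthonormalBasis (Fin (4 * n)) ℝ V)
    (A : V → V → V → ℝ)
    (hA : ∀ X Y Z : V,
      2 * A X Y Z =
        -(T X (J₁ Y) (J₁ Z)) - T (J₁ X) (J₁ Y) Z - T X (J₃ Y) (J₃ Z) - T (J₁ X) (J₃ Y) (J₂ Z))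
    (X : V) :
    ∑ a, A X (e a) (J₁ (e a)) = 0 := by
  let U : V ≃ₗᵢ[ℝ] V := .ofSurjective (J₂.isometryOfInner hJ₂iso) fun Y =>
    ⟨-(J₂ Y), by simp [hJ₂sq]⟩
  have htrace := e.sum_bilin_self_eq (e.map U) ((T X).comp J₁)
  simp only [LinearMap.comp_apply, OrthonormalBasis.map_apply] at htrace
  have hsum : ∑ a, 2 * A X (e a) (J₁ (e a)) = 0 := by
    simp only [two_mul_apply_J₁_self_eq hJ₁sq hJ₁₂ hJ₂₁ T halt₂ A hA, Finset.sum_sub_distrib]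
    exact sub_eq_zero.mpr htrace
  rw [← Finset.mul_sum] at hsum
  simpa using hsum

theorem stmt_3
    {V : Type*} [NormedAddCommGroup V] [InnerProductSpace ℝ V]
    [FiniteDimensional ℝ V] {n : ℕ}
    (hdim : Module.finrank ℝ V = 4 * n)
    (J₁ J₂ J₃ : V →ₗ[ℝ] V)
    (hJ₁iso : ∀ X Y : V, ⟪J₁ X, J₁ Y⟫ = ⟪X, Y⟫)
    (hJ₂iso : ∀ X Y : V, ⟪J₂ X, J₂ Y⟫ = ⟪X, Y⟫)
    (hJ₃iso : ∀ X Y : V, ⟪J₃ X, J₃ Y⟫ = ⟪X, Y⟫)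
    (hJ₁sq : ∀ X : V, J₁ (J₁ X) = -X)
    (hJ₂sq : ∀ X : V, J₂ (J₂ X) = -X)
    (hJ₃sq : ∀ X : V, J₃ (J₃ X) = -X)
    (hJ₁₂ : ∀ X : V, J₁ (J₂ X) = J₃ X)
    (hJ₂₁ : ∀ X : V, J₂ (J₁ X) = -(J₃ X))
    (T : V →ₗ[ℝ] V →ₗ[ℝ] V →ₗ[ℝ] ℝ)
    (halt₁ : ∀ X Y Z : V, T X Y Z = -(T Y X Z))
    (halt₂ : ∀ X Y Z : V, T X Y Z = -(T X Z Y))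
    (htype₁ : ∀ X Y Z : V,
      T X Y Z - T (J₁ X) (J₁ Y) Z - T (J₁ X) Y (J₁ Z) - T X (J₁ Y) (J₁ Z) = 0)
    (htype₂ : ∀ X Y Z : V,
      T X Y Z - T (J₂ X) (J₂ Y) Z - T (J₂ X) Y (J₂ Z) - T X (J₂ Y) (J₂ Z) = 0)
    (htype₃ : ∀ X Y Z : V,
      T X Y Z - T (J₃ X) (J₃ Y) Z - T (J₃ X) Y (J₃ Z) - T X (J₃ Y) (J₃ Z) = 0)
    (hmix₁ : ∀ X Y Z : V,
      T (J₁ X) (J₁ Y) Z - T (J₃ X) (J₃ Y) Z - T (J₃ X) (J₁ Y) (J₂ Z) - T (J₁ X) (J₃ Y) (J₂ Z) = 0)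
    (hmix₂ : ∀ X Y Z : V,
      T (J₂ X) (J₂ Y) Z - T (J₁ X) (J₁ Y) Z - T (J₁ X) (J₂ Y) (J₃ Z) - T (J₂ X) (J₁ Y) (J₃ Z) = 0)
    (hmix₃ : ∀ X Y Z : V,
      T (J₃ X) (J₃ Y) Z - T (J₂ X) (J₂ Y) Z - T (J₂ X) (J₃ Y) (J₁ Z) - T (J₃ X) (J₂ Y) (J₁ Z) = 0)
    (e : OrthonormalBasis (Fin (4 * n)) ℝ V)
    (A : V → V → V → ℝ)
    (hA : ∀ X Y Z : V,
      2 * A X Y Z =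
        -(T X (J₁ Y) (J₁ Z)) - T (J₁ X) (J₁ Y) Z - T X (J₃ Y) (J₃ Z) - T (J₁ X) (J₃ Y) (J₂ Z))
    (X : V) :
    ∑ a, A X (e a) (J₁ (e a)) = 0 :=
  stmt_3_general J₁ J₂ J₃ hJ₂iso hJ₁sq hJ₂sq hJ₁₂ hJ₂₁ T halt₂ e A hA X
end

section
/- Let V be a real inner product space of dimension 4n with inner product g, equipped with a hyperhermitian structure (J₁,J₂,J₃). Let T be a 3-form on V which is of type (1,2)+(2,1) with respect to each of J₁, J₂, J₃ and satisfies the mixed type identity, let (e_a)_{a=1}^{4n} be an orthonormal basis of V, and let A be the difference tensor defined by 2A(X,Y,Z) = −T(X,J₁Y,J₁Z) − T(J₁X,J₁Y,Z) − T(X,J₃Y,J₃Z) − T(J₁X,J₃Y,J₂Z). Then for every X ∈ V, ∑_{a=1}^{4n} A(X,e_a,J₂e_a) = 0. -/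
/-!
Put `S(X) = ∑ₐ T(X, eₐ, J₂eₐ)`. Evaluated on `(X, Y, J₂Y)`, the mixed type identity kills
`T(J₁X, J₁Y, J₂Y)`; with this, the `J₁`-type condition turns `T(X, Y, J₂Y)` into `T(X, J₁Y, J₃Y)`,
and the definition of `A` collapses to `A(X, Y, J₂Y) = -T(X, Y, J₂Y)`. Finally `S(X)` is the trace
of a bilinear form, hence the same for the orthonormal basis `J₁eₐ`, which turns it into `-S(X)`.
-/

open scoped RealInnerProductSpace TensorProduct

theorem OrthonormalBasis.sum_bilin_apply_self_eq {E : Type*} [NormedAddCommGroup E]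
    [InnerProductSpace ℝ E] [FiniteDimensional ℝ E] {ι κ : Type*} [Fintype ι] [Fintype κ]
    (B : E →ₗ[ℝ] E →ₗ[ℝ] ℝ) (v : OrthonormalBasis ι ℝ E) (w : OrthonormalBasis κ ℝ E) :
    ∑ i, B (v i) (v i) = ∑ j, B (w j) (w j) := by
  have h := congrArg (TensorProduct.lift B)
    ((InnerProductSpace.canonicalCovariantTensor_eq_sum E v).symm.trans
      (InnerProductSpace.canonicalCovariantTensor_eq_sum E w))
  simpa only [map_sum, TensorProduct.lift.tmul] using h

theorem OrthonormalBasis.sum_bilin_apply_isometry_self_eq {E : Type*} [NormedAddCommGroup E]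
    [InnerProductSpace ℝ E] [FiniteDimensional ℝ E] {ι : Type*} [Fintype ι]
    (B : E →ₗ[ℝ] E →ₗ[ℝ] ℝ) (v : OrthonormalBasis ι ℝ E) (L : E ≃ₗᵢ[ℝ] E) :
    ∑ i, B (L (v i)) (L (v i)) = ∑ i, B (v i) (v i) := by
  simpa only [OrthonormalBasis.map_apply] using (v.map L).sum_bilin_apply_self_eq B v

noncomputable def LinearMap.isometryEquivOfSqEqNeg {E : Type*} [NormedAddCommGroup E]
    [InnerProductSpace ℝ E] (J : E →ₗ[ℝ] E) (hiso : ∀ x y, ⟪J x, J y⟫ = ⟪x, y⟫)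
    (hsq : ∀ x, J (J x) = -x) : E ≃ₗᵢ[ℝ] E :=
  LinearIsometryEquiv.ofSurjective (J.isometryOfInner hiso)
    fun y => ⟨-J y, by simp [hsq]⟩

section TypeIdentities

variable {V : Type*} [AddCommGroup V] [Module ℝ V]
  {T : V →ₗ[ℝ] V →ₗ[ℝ] V →ₗ[ℝ] ℝ} {J₁ J₂ J₃ : V →ₗ[ℝ] V}

theorem apply_J₁_J₁_J₂_eq_zero (halt : ∀ X Y Z, T X Y Z = -T X Z Y)
    (hJ₃₂ : ∀ X, J₃ (J₂ X) = -J₁ X)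
    (hmix : ∀ X Y Z, T (J₂ X) (J₂ Y) Z - T (J₁ X) (J₁ Y) Z
      - T (J₁ X) (J₂ Y) (J₃ Z) - T (J₂ X) (J₁ Y) (J₃ Z) = 0)
    (X Y : V) : T (J₁ X) (J₁ Y) (J₂ Y) = 0 := by
  have h := hmix X Y (J₂ Y)
  simp only [hJ₃₂, map_neg] at h
  linarith [halt (J₂ X) (J₂ Y) (J₂ Y), halt (J₂ X) (J₁ Y) (J₁ Y), halt (J₁ X) (J₂ Y) (J₁ Y)]

theorem apply_J₂_eq_apply_J₁_J₃ (hJ₁sq : ∀ X, J₁ (J₁ X) = -X) (hJ₁₂ : ∀ X, J₁ (J₂ X) = J₃ X)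
    (hJ₂₁ : ∀ X, J₂ (J₁ X) = -J₃ X)
    (htype : ∀ X Y Z, T X Y Z - T (J₁ X) (J₁ Y) Z - T (J₁ X) Y (J₁ Z) - T X (J₁ Y) (J₁ Z) = 0)
    (hvanish : ∀ X Y, T (J₁ X) (J₁ Y) (J₂ Y) = 0) (X Y : V) :
    T X Y (J₂ Y) = T X (J₁ Y) (J₃ Y) := by
  have h := htype X Y (J₂ Y)
  have h' := hvanish X (J₁ Y)
  simp only [hJ₁₂, hJ₁sq, hJ₂₁, map_neg, LinearMap.neg_apply, neg_neg] at h h'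
  linarith [hvanish X Y]

theorem apply_J₁_J₂_J₁_eq_neg (hJ₂₁ : ∀ X, J₂ (J₁ X) = -J₃ X)
    (hsplit : ∀ X Y, T X Y (J₂ Y) = T X (J₁ Y) (J₃ Y)) (X Y : V) :
    T X (J₁ Y) (J₂ (J₁ Y)) = -T X Y (J₂ Y) := by
  rw [hJ₂₁, map_neg, hsplit]

theorem difference_apply_J₂_eq_neg {A : V → V → V → ℝ} (halt : ∀ X Y Z, T X Y Z = -T X Z Y)
    (hJ₁sq : ∀ X, J₁ (J₁ X) = -X) (hJ₂sq : ∀ X, J₂ (J₂ X) = -X) (hJ₁₂ : ∀ X, J₁ (J₂ X) = J₃ X)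
    (hJ₂₁ : ∀ X, J₂ (J₁ X) = -J₃ X) (hJ₃₂ : ∀ X, J₃ (J₂ X) = -J₁ X)
    (hvanish : ∀ X Y, T (J₁ X) (J₁ Y) (J₂ Y) = 0)
    (hsplit : ∀ X Y, T X Y (J₂ Y) = T X (J₁ Y) (J₃ Y))
    (hA : ∀ X Y Z, 2 * A X Y Z =
      -(T X (J₁ Y) (J₁ Z)) - T (J₁ X) (J₁ Y) Z - T X (J₃ Y) (J₃ Z) - T (J₁ X) (J₃ Y) (J₂ Z))
    (X Y : V) : A X Y (J₂ Y) = -T X Y (J₂ Y) := by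
  have h := hA X Y (J₂ Y)
  have h' := hvanish X (J₁ Y)
  simp only [hJ₁₂, hJ₃₂, hJ₂sq, hJ₁sq, hJ₂₁, map_neg, LinearMap.neg_apply] at h h'
  linarith [hvanish X Y, halt X (J₃ Y) (J₁ Y), halt (J₁ X) (J₃ Y) Y, hsplit X Y]

end TypeIdentities

theorem stmt_4_general
    {V : Type*} [NormedAddCommGroup V] [InnerProductSpace ℝ V]
    [FiniteDimensional ℝ V] {n : ℕ}
    (J₁ J₂ J₃ : V →ₗ[ℝ] V)
    (hJ₁iso : ∀ X Y : V, ⟪J₁ X, J₁ Y⟫ = ⟪X, Y⟫)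
    (hJ₁sq : ∀ X : V, J₁ (J₁ X) = -X)
    (hJ₂sq : ∀ X : V, J₂ (J₂ X) = -X)
    (hJ₁₂ : ∀ X : V, J₁ (J₂ X) = J₃ X)
    (hJ₂₁ : ∀ X : V, J₂ (J₁ X) = -(J₃ X))
    (T : V →ₗ[ℝ] V →ₗ[ℝ] V →ₗ[ℝ] ℝ)
    (halt₂ : ∀ X Y Z : V, T X Y Z = -(T X Z Y))
    (htype₁ : ∀ X Y Z : V,
      T X Y Z - T (J₁ X) (J₁ Y) Z - T (J₁ X) Y (J₁ Z) - T X (J₁ Y) (J₁ Z) = 0)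
    (hmix₂ : ∀ X Y Z : V,
      T (J₂ X) (J₂ Y) Z - T (J₁ X) (J₁ Y) Z - T (J₁ X) (J₂ Y) (J₃ Z) - T (J₂ X) (J₁ Y) (J₃ Z) = 0)
    (e : OrthonormalBasis (Fin (4 * n)) ℝ V)
    (A : V → V → V → ℝ)
    (hA : ∀ X Y Z : V,
      2 * A X Y Z =
        -(T X (J₁ Y) (J₁ Z)) - T (J₁ X) (J₁ Y) Z - T X (J₃ Y) (J₃ Z) - T (J₁ X) (J₃ Y) (J₂ Z))
    (X : V) :
    ∑ a, A X (e a) (J₂ (e a)) = 0 := by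
  have hJ₃₂ : ∀ X, J₃ (J₂ X) = -J₁ X := fun X => by rw [← hJ₁₂, hJ₂sq, map_neg]
  have hvanish := apply_J₁_J₁_J₂_eq_zero halt₂ hJ₃₂ hmix₂
  have hsplit := apply_J₂_eq_apply_J₁_J₃ hJ₁sq hJ₁₂ hJ₂₁ htype₁ hvanish
  let J : V ≃ₗᵢ[ℝ] V := J₁.isometryEquivOfSqEqNeg hJ₁iso hJ₁sq
  have hS : ∑ a, T X (e a) (J₂ (e a)) = 0 := by
    have h := e.sum_bilin_apply_isometry_self_eq ((T X).compl₂ J₂) J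
    change ∑ a, T X (J₁ (e a)) (J₂ (J₁ (e a))) = ∑ a, T X (e a) (J₂ (e a)) at h
    simp only [apply_J₁_J₂_J₁_eq_neg hJ₂₁ hsplit, Finset.sum_neg_distrib] at h
    linarith
  simp only [difference_apply_J₂_eq_neg halt₂ hJ₁sq hJ₂sq hJ₁₂ hJ₂₁ hJ₃₂ hvanish hsplit hA,
    Finset.sum_neg_distrib, hS, neg_zero]

theorem stmt_4
    {V : Type*} [NormedAddCommGroup V] [InnerProductSpace ℝ V]
    [FiniteDimensional ℝ V] {n : ℕ}
    (hdim : Module.finrank ℝ V = 4 * n)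
    (J₁ J₂ J₃ : V →ₗ[ℝ] V)
    (hJ₁iso : ∀ X Y : V, ⟪J₁ X, J₁ Y⟫ = ⟪X, Y⟫)
    (hJ₂iso : ∀ X Y : V, ⟪J₂ X, J₂ Y⟫ = ⟪X, Y⟫)
    (hJ₃iso : ∀ X Y : V, ⟪J₃ X, J₃ Y⟫ = ⟪X, Y⟫)
    (hJ₁sq : ∀ X : V, J₁ (J₁ X) = -X)
    (hJ₂sq : ∀ X : V, J₂ (J₂ X) = -X)
    (hJ₃sq : ∀ X : V, J₃ (J₃ X) = -X)
    (hJ₁₂ : ∀ X : V, J₁ (J₂ X) = J₃ X)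
    (hJ₂₁ : ∀ X : V, J₂ (J₁ X) = -(J₃ X))
    (T : V →ₗ[ℝ] V →ₗ[ℝ] V →ₗ[ℝ] ℝ)
    (halt₁ : ∀ X Y Z : V, T X Y Z = -(T Y X Z))
    (halt₂ : ∀ X Y Z : V, T X Y Z = -(T X Z Y))
    (htype₁ : ∀ X Y Z : V,
      T X Y Z - T (J₁ X) (J₁ Y) Z - T (J₁ X) Y (J₁ Z) - T X (J₁ Y) (J₁ Z) = 0)
    (htype₂ : ∀ X Y Z : V,
      T X Y Z - T (J₂ X) (J₂ Y) Z - T (J₂ X) Y (J₂ Z) - T X (J₂ Y) (J₂ Z) = 0)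
    (htype₃ : ∀ X Y Z : V,
      T X Y Z - T (J₃ X) (J₃ Y) Z - T (J₃ X) Y (J₃ Z) - T X (J₃ Y) (J₃ Z) = 0)
    (hmix₁ : ∀ X Y Z : V,
      T (J₁ X) (J₁ Y) Z - T (J₃ X) (J₃ Y) Z - T (J₃ X) (J₁ Y) (J₂ Z) - T (J₁ X) (J₃ Y) (J₂ Z) = 0)
    (hmix₂ : ∀ X Y Z : V,
      T (J₂ X) (J₂ Y) Z - T (J₁ X) (J₁ Y) Z - T (J₁ X) (J₂ Y) (J₃ Z) - T (J₂ X) (J₁ Y) (J₃ Z) = 0)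
    (hmix₃ : ∀ X Y Z : V,
      T (J₃ X) (J₃ Y) Z - T (J₂ X) (J₂ Y) Z - T (J₂ X) (J₃ Y) (J₁ Z) - T (J₃ X) (J₂ Y) (J₁ Z) = 0)
    (e : OrthonormalBasis (Fin (4 * n)) ℝ V)
    (A : V → V → V → ℝ)
    (hA : ∀ X Y Z : V,
      2 * A X Y Z =
        -(T X (J₁ Y) (J₁ Z)) - T (J₁ X) (J₁ Y) Z - T X (J₃ Y) (J₃ Z) - T (J₁ X) (J₃ Y) (J₂ Z))
    (X : V) :
    ∑ a, A X (e a) (J₂ (e a)) = 0 :=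
  stmt_4_general J₁ J₂ J₃ hJ₁iso hJ₁sq hJ₂sq hJ₁₂ hJ₂₁ T halt₂ htype₁ hmix₂ e A hA X
end

section
/- Let V be a real inner product space of dimension 4n with inner product g, equipped with a hyperhermitian structure (J₁,J₂,J₃). Let T be a 3-form on V which is of type (1,2)+(2,1) with respect to each of J₁, J₂, J₃ and satisfies the mixed type identity, and let A be the difference tensor defined by 2A(X,Y,Z) = −T(X,J₁Y,J₁Z) − T(J₁X,J₁Y,Z) − T(X,J₃Y,J₃Z) − T(J₁X,J₃Y,J₂Z). Then for every s ∈ {1,2,3} and all X,Y,Z ∈ V, A(X,J_sY,J_sZ) = A(X,Y,Z). -/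
/-!
Write `2A = D` with `D` the right-hand side of the defining formula. Substituting `J₂Y, J₂Z`
for `Y, Z` only permutes the four terms of `D`, using the quaternion relations. Substituting
`J₁Y, J₁Z` changes `D` by the sum of the two type `(1,2)+(2,1)` identities for `J₁` at
`(X, Y, Z)` and `(X, J₂Y, J₂Z)`, which vanishes. Invariance under `J₃ = J₁J₂` follows from these two.
-/

namespace Hyperhermitian

variable {R V : Type*} [CommRing R] [AddCommGroup V] [Module R V]

def IsType12Add21 (J : V →ₗ[R] V) (T : V →ₗ[R] V →ₗ[R] V →ₗ[R] R) : Prop :=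
  ∀ X Y Z : V, T X Y Z - T (J X) (J Y) Z - T (J X) Y (J Z) - T X (J Y) (J Z) = 0

/-- `2A`, kept undivided so that no division by `2` is needed in `R`. -/
def twiceDiffTensor (J₁ J₂ J₃ : V →ₗ[R] V) (T : V →ₗ[R] V →ₗ[R] V →ₗ[R] R) (X Y Z : V) : R :=
  -(T X (J₁ Y) (J₁ Z)) - T (J₁ X) (J₁ Y) Z - T X (J₃ Y) (J₃ Z) - T (J₁ X) (J₃ Y) (J₂ Z)

variable {J₁ J₂ J₃ : V →ₗ[R] V} {T : V →ₗ[R] V →ₗ[R] V →ₗ[R] R}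

theorem J₃_J₁_apply (hJ₁sq : ∀ X, J₁ (J₁ X) = -X) (hJ₁₂ : ∀ X, J₁ (J₂ X) = J₃ X)
    (hJ₂₁ : ∀ X, J₂ (J₁ X) = -(J₃ X)) (X : V) : J₃ (J₁ X) = J₂ X := by
  rw [← hJ₁₂, hJ₂₁, map_neg, ← hJ₁₂, hJ₁sq, neg_neg]

theorem J₃_J₂_apply (hJ₂sq : ∀ X, J₂ (J₂ X) = -X) (hJ₁₂ : ∀ X, J₁ (J₂ X) = J₃ X) (X : V) :
    J₃ (J₂ X) = -(J₁ X) := by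
  rw [← hJ₁₂, hJ₂sq, map_neg]

theorem twiceDiffTensor_J₂_J₂ (hJ₂sq : ∀ X, J₂ (J₂ X) = -X) (hJ₁₂ : ∀ X, J₁ (J₂ X) = J₃ X)
    (X Y Z : V) : twiceDiffTensor J₁ J₂ J₃ T X (J₂ Y) (J₂ Z) = twiceDiffTensor J₁ J₂ J₃ T X Y Z := by
  simp only [twiceDiffTensor, hJ₁₂, J₃_J₂_apply hJ₂sq hJ₁₂, hJ₂sq, map_neg, LinearMap.neg_apply]
  ring

theorem twiceDiffTensor_J₁_J₁ (hJ₁sq : ∀ X, J₁ (J₁ X) = -X) (hJ₁₂ : ∀ X, J₁ (J₂ X) = J₃ X)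
    (hJ₂₁ : ∀ X, J₂ (J₁ X) = -(J₃ X)) (hT : IsType12Add21 J₁ T) (X Y Z : V) :
    twiceDiffTensor J₁ J₂ J₃ T X (J₁ Y) (J₁ Z) = twiceDiffTensor J₁ J₂ J₃ T X Y Z := by
  have hYZ := hT X Y Z
  have hJ₂YZ := hT X (J₂ Y) (J₂ Z)
  rw [hJ₁₂, hJ₁₂] at hJ₂YZ
  simp only [twiceDiffTensor, hJ₁sq, J₃_J₁_apply hJ₁sq hJ₁₂ hJ₂₁, hJ₂₁, map_neg,
    LinearMap.neg_apply]
  linear_combination -hYZ - hJ₂YZ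

theorem twiceDiffTensor_J₃_J₃ (hJ₁sq : ∀ X, J₁ (J₁ X) = -X) (hJ₂sq : ∀ X, J₂ (J₂ X) = -X)
    (hJ₁₂ : ∀ X, J₁ (J₂ X) = J₃ X) (hJ₂₁ : ∀ X, J₂ (J₁ X) = -(J₃ X)) (hT : IsType12Add21 J₁ T)
    (X Y Z : V) :
    twiceDiffTensor J₁ J₂ J₃ T X (J₃ Y) (J₃ Z) = twiceDiffTensor J₁ J₂ J₃ T X Y Z := by
  rw [← hJ₁₂, ← hJ₁₂, twiceDiffTensor_J₁_J₁ hJ₁sq hJ₁₂ hJ₂₁ hT,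
    twiceDiffTensor_J₂_J₂ hJ₂sq hJ₁₂]

end Hyperhermitian

open scoped RealInnerProductSpace

theorem stmt_6_general
    {V : Type*} [NormedAddCommGroup V] [InnerProductSpace ℝ V]
    (J₁ J₂ J₃ : V →ₗ[ℝ] V)
    (hJ₁sq : ∀ X : V, J₁ (J₁ X) = -X)
    (hJ₂sq : ∀ X : V, J₂ (J₂ X) = -X)
    (hJ₁₂ : ∀ X : V, J₁ (J₂ X) = J₃ X)
    (hJ₂₁ : ∀ X : V, J₂ (J₁ X) = -(J₃ X))
    (T : V →ₗ[ℝ] V →ₗ[ℝ] V →ₗ[ℝ] ℝ)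
    (htype₁ : ∀ X Y Z : V,
      T X Y Z - T (J₁ X) (J₁ Y) Z - T (J₁ X) Y (J₁ Z) - T X (J₁ Y) (J₁ Z) = 0)
    (A : V → V → V → ℝ)
    (hA : ∀ X Y Z : V,
      2 * A X Y Z =
        -(T X (J₁ Y) (J₁ Z)) - T (J₁ X) (J₁ Y) Z - T X (J₃ Y) (J₃ Z) - T (J₁ X) (J₃ Y) (J₂ Z))
    : ∀ X Y Z : V,
      A X (J₁ Y) (J₁ Z) = A X Y Z ∧
      A X (J₂ Y) (J₂ Z) = A X Y Z ∧
      A X (J₃ Y) (J₃ Z) = A X Y Z := by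
  open Hyperhermitian in
  intro X Y Z
  have of_twice : ∀ J : V →ₗ[ℝ] V,
      twiceDiffTensor J₁ J₂ J₃ T X (J Y) (J Z) = twiceDiffTensor J₁ J₂ J₃ T X Y Z →
        A X (J Y) (J Z) = A X Y Z := fun J h =>
    mul_left_cancel₀ two_ne_zero (by rw [hA, hA]; exact h)
  exact ⟨of_twice J₁ (twiceDiffTensor_J₁_J₁ hJ₁sq hJ₁₂ hJ₂₁ htype₁ X Y Z),
    of_twice J₂ (twiceDiffTensor_J₂_J₂ hJ₂sq hJ₁₂ X Y Z),
    of_twice J₃ (twiceDiffTensor_J₃_J₃ hJ₁sq hJ₂sq hJ₁₂ hJ₂₁ htype₁ X Y Z)⟩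

theorem stmt_6
    {V : Type*} [NormedAddCommGroup V] [InnerProductSpace ℝ V]
    [FiniteDimensional ℝ V] {n : ℕ}
    (hdim : Module.finrank ℝ V = 4 * n)
    (J₁ J₂ J₃ : V →ₗ[ℝ] V)
    (hJ₁iso : ∀ X Y : V, ⟪J₁ X, J₁ Y⟫ = ⟪X, Y⟫)
    (hJ₂iso : ∀ X Y : V, ⟪J₂ X, J₂ Y⟫ = ⟪X, Y⟫)
    (hJ₃iso : ∀ X Y : V, ⟪J₃ X, J₃ Y⟫ = ⟪X, Y⟫)
    (hJ₁sq : ∀ X : V, J₁ (J₁ X) = -X)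
    (hJ₂sq : ∀ X : V, J₂ (J₂ X) = -X)
    (hJ₃sq : ∀ X : V, J₃ (J₃ X) = -X)
    (hJ₁₂ : ∀ X : V, J₁ (J₂ X) = J₃ X)
    (hJ₂₁ : ∀ X : V, J₂ (J₁ X) = -(J₃ X))
    (T : V →ₗ[ℝ] V →ₗ[ℝ] V →ₗ[ℝ] ℝ)
    (halt₁ : ∀ X Y Z : V, T X Y Z = -(T Y X Z))
    (halt₂ : ∀ X Y Z : V, T X Y Z = -(T X Z Y))
    (htype₁ : ∀ X Y Z : V,
      T X Y Z - T (J₁ X) (J₁ Y) Z - T (J₁ X) Y (J₁ Z) - T X (J₁ Y) (J₁ Z) = 0)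
    (htype₂ : ∀ X Y Z : V,
      T X Y Z - T (J₂ X) (J₂ Y) Z - T (J₂ X) Y (J₂ Z) - T X (J₂ Y) (J₂ Z) = 0)
    (htype₃ : ∀ X Y Z : V,
      T X Y Z - T (J₃ X) (J₃ Y) Z - T (J₃ X) Y (J₃ Z) - T X (J₃ Y) (J₃ Z) = 0)
    (hmix₁ : ∀ X Y Z : V,
      T (J₁ X) (J₁ Y) Z - T (J₃ X) (J₃ Y) Z - T (J₃ X) (J₁ Y) (J₂ Z) - T (J₁ X) (J₃ Y) (J₂ Z) = 0)
    (hmix₂ : ∀ X Y Z : V,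
      T (J₂ X) (J₂ Y) Z - T (J₁ X) (J₁ Y) Z - T (J₁ X) (J₂ Y) (J₃ Z) - T (J₂ X) (J₁ Y) (J₃ Z) = 0)
    (hmix₃ : ∀ X Y Z : V,
      T (J₃ X) (J₃ Y) Z - T (J₂ X) (J₂ Y) Z - T (J₂ X) (J₃ Y) (J₁ Z) - T (J₃ X) (J₂ Y) (J₁ Z) = 0)
    (A : V → V → V → ℝ)
    (hA : ∀ X Y Z : V,
      2 * A X Y Z =
        -(T X (J₁ Y) (J₁ Z)) - T (J₁ X) (J₁ Y) Z - T X (J₃ Y) (J₃ Z) - T (J₁ X) (J₃ Y) (J₂ Z))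
    : ∀ X Y Z : V,
      A X (J₁ Y) (J₁ Z) = A X Y Z ∧
      A X (J₂ Y) (J₂ Z) = A X Y Z ∧
      A X (J₃ Y) (J₃ Z) = A X Y Z :=
  stmt_6_general J₁ J₂ J₃ hJ₁sq hJ₂sq hJ₁₂ hJ₂₁ T htype₁ A hA
end

section
/- Let V be a real inner product space of dimension 4n with inner product g, equipped with a hyperhermitian structure (J₁,J₂,J₃). Let R : V×V×V×V → ℝ be a quadrilinear form satisfying: (i) R(X,Y,Z,U) = −R(Y,X,Z,U); (ii) the first Bianchi identity R(X,Y,Z,U) + R(Y,Z,X,U) + R(Z,X,Y,U) = 0; (iii) R(X,Y,J_sZ,J_sU) = R(X,Y,Z,U) for s = 1,2,3 (i.e. the curvature commutes with each J_s). For an orthonormal basis (e_a)_{a=1}^{4n}, define Ric(X,Y) = ∑_a R(e_a,X,Y,e_a) and ρ_s(X,Y) = (1/2)∑_a R(X,Y,e_a,J_se_a). Then for every s ∈ {1,2,3} and all X,Y ∈ V, Ric(J_sX,J_sY) + Ric(Y,X) = 2ρ_s(J_sX,Y). -/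
/-!
The identity already holds term by term in the traces. For a single vector `E`, invariance
under `J` and `J² = -1` give `R(E,JX,JY,E) = -R(E,JX,Y,JE)`; the Bianchi identity in the first
three slots rewrites this as `R(JX,Y,E,JE) + R(Y,E,JX,JE)`, and invariance under `J` followed by
skew-symmetry turns the last term into `-R(E,Y,X,E)`. Summing over the basis gives the claim.
-/

open scoped RealInnerProductSpace

section

variable {K V : Type*} [CommRing K] [AddCommGroup V] [Module K V]
  (J : V →ₗ[K] V) (hJsq : ∀ X : V, J (J X) = -X)
  (R : V →ₗ[K] V →ₗ[K] V →ₗ[K] V →ₗ[K] K)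
  (hskew : ∀ X Y Z U : V, R X Y Z U = -(R Y X Z U))
  (hbianchi : ∀ X Y Z U : V, R X Y Z U + R Y Z X U + R Z X Y U = 0)
  (hcomm : ∀ X Y Z U : V, R X Y (J Z) (J U) = R X Y Z U)
include hJsq hskew hbianchi hcomm

theorem R_J_J_add_R_eq_R_J (E X Y : V) :
    R E (J X) (J Y) E + R E Y X E = R (J X) Y E (J E) := by
  have hJJ : R E (J X) (J Y) E = -R E (J X) Y (J E) := by
    rw [← hcomm E (J X) Y (J E), hJsq, map_neg, neg_neg]
  linear_combination hJJ - hbianchi E (J X) Y (J E) + hcomm Y E X E + hskew Y E X E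

theorem sum_R_J_J_add_sum_R_eq_sum_R_J {ι : Type*} [Fintype ι] (e : ι → V) (X Y : V) :
    ∑ a, R (e a) (J X) (J Y) (e a) + ∑ a, R (e a) Y X (e a)
      = ∑ a, R (J X) Y (e a) (J (e a)) := by
  rw [← Finset.sum_add_distrib]
  exact Finset.sum_congr rfl fun a _ ↦ R_J_J_add_R_eq_R_J J hJsq R hskew hbianchi hcomm (e a) X Y

end

theorem stmt_8_general
    {V : Type*} [NormedAddCommGroup V] [InnerProductSpace ℝ V]
    {n : ℕ}
    (J₁ J₂ J₃ : V →ₗ[ℝ] V)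
    (hJ₁sq : ∀ X : V, J₁ (J₁ X) = -X)
    (hJ₂sq : ∀ X : V, J₂ (J₂ X) = -X)
    (hJ₃sq : ∀ X : V, J₃ (J₃ X) = -X)
    (R : V →ₗ[ℝ] V →ₗ[ℝ] V →ₗ[ℝ] V →ₗ[ℝ] ℝ)
    (hskew : ∀ X Y Z U : V, R X Y Z U = -(R Y X Z U))
    (hbianchi : ∀ X Y Z U : V, R X Y Z U + R Y Z X U + R Z X Y U = 0)
    (hcomm₁ : ∀ X Y Z U : V, R X Y (J₁ Z) (J₁ U) = R X Y Z U)
    (hcomm₂ : ∀ X Y Z U : V, R X Y (J₂ Z) (J₂ U) = R X Y Z U)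
    (hcomm₃ : ∀ X Y Z U : V, R X Y (J₃ Z) (J₃ U) = R X Y Z U)
    (e : OrthonormalBasis (Fin (4 * n)) ℝ V)
    (Ric : V → V → ℝ)
    (hRic : ∀ X Y : V, Ric X Y = ∑ a, R (e a) X Y (e a))
    (ρ₁ ρ₂ ρ₃ : V → V → ℝ)
    (hρ₁ : ∀ X Y : V, ρ₁ X Y = (1 / 2 : ℝ) * ∑ a, R X Y (e a) (J₁ (e a)))
    (hρ₂ : ∀ X Y : V, ρ₂ X Y = (1 / 2 : ℝ) * ∑ a, R X Y (e a) (J₂ (e a)))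
    (hρ₃ : ∀ X Y : V, ρ₃ X Y = (1 / 2 : ℝ) * ∑ a, R X Y (e a) (J₃ (e a))) :
    ∀ X Y : V,
      Ric (J₁ X) (J₁ Y) + Ric Y X = 2 * ρ₁ (J₁ X) Y ∧
      Ric (J₂ X) (J₂ Y) + Ric Y X = 2 * ρ₂ (J₂ X) Y ∧
      Ric (J₃ X) (J₃ Y) + Ric Y X = 2 * ρ₃ (J₃ X) Y := by
  intro X Y
  refine ⟨?_, ?_, ?_⟩
  · rw [hRic, hRic, hρ₁, sum_R_J_J_add_sum_R_eq_sum_R_J J₁ hJ₁sq R hskew hbianchi hcomm₁]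
    ring
  · rw [hRic, hRic, hρ₂, sum_R_J_J_add_sum_R_eq_sum_R_J J₂ hJ₂sq R hskew hbianchi hcomm₂]
    ring
  · rw [hRic, hRic, hρ₃, sum_R_J_J_add_sum_R_eq_sum_R_J J₃ hJ₃sq R hskew hbianchi hcomm₃]
    ring

theorem stmt_8
    {V : Type*} [NormedAddCommGroup V] [InnerProductSpace ℝ V]
    [FiniteDimensional ℝ V] {n : ℕ}
    (hdim : Module.finrank ℝ V = 4 * n)
    (J₁ J₂ J₃ : V →ₗ[ℝ] V)
    (hJ₁iso : ∀ X Y : V, ⟪J₁ X, J₁ Y⟫ = ⟪X, Y⟫)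
    (hJ₂iso : ∀ X Y : V, ⟪J₂ X, J₂ Y⟫ = ⟪X, Y⟫)
    (hJ₃iso : ∀ X Y : V, ⟪J₃ X, J₃ Y⟫ = ⟪X, Y⟫)
    (hJ₁sq : ∀ X : V, J₁ (J₁ X) = -X)
    (hJ₂sq : ∀ X : V, J₂ (J₂ X) = -X)
    (hJ₃sq : ∀ X : V, J₃ (J₃ X) = -X)
    (hJ₁₂ : ∀ X : V, J₁ (J₂ X) = J₃ X)
    (hJ₂₁ : ∀ X : V, J₂ (J₁ X) = -(J₃ X))
    (R : V →ₗ[ℝ] V →ₗ[ℝ] V →ₗ[ℝ] V →ₗ[ℝ] ℝ)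
    (hskew : ∀ X Y Z U : V, R X Y Z U = -(R Y X Z U))
    (hbianchi : ∀ X Y Z U : V, R X Y Z U + R Y Z X U + R Z X Y U = 0)
    (hcomm₁ : ∀ X Y Z U : V, R X Y (J₁ Z) (J₁ U) = R X Y Z U)
    (hcomm₂ : ∀ X Y Z U : V, R X Y (J₂ Z) (J₂ U) = R X Y Z U)
    (hcomm₃ : ∀ X Y Z U : V, R X Y (J₃ Z) (J₃ U) = R X Y Z U)
    (e : OrthonormalBasis (Fin (4 * n)) ℝ V)
    (Ric : V → V → ℝ)
    (hRic : ∀ X Y : V, Ric X Y = ∑ a, R (e a) X Y (e a))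
    (ρ₁ ρ₂ ρ₃ : V → V → ℝ)
    (hρ₁ : ∀ X Y : V, ρ₁ X Y = (1 / 2 : ℝ) * ∑ a, R X Y (e a) (J₁ (e a)))
    (hρ₂ : ∀ X Y : V, ρ₂ X Y = (1 / 2 : ℝ) * ∑ a, R X Y (e a) (J₂ (e a)))
    (hρ₃ : ∀ X Y : V, ρ₃ X Y = (1 / 2 : ℝ) * ∑ a, R X Y (e a) (J₃ (e a))) :
    ∀ X Y : V,
      Ric (J₁ X) (J₁ Y) + Ric Y X = 2 * ρ₁ (J₁ X) Y ∧
      Ric (J₂ X) (J₂ Y) + Ric Y X = 2 * ρ₂ (J₂ X) Y ∧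
      Ric (J₃ X) (J₃ Y) + Ric Y X = 2 * ρ₃ (J₃ X) Y :=
  stmt_8_general J₁ J₂ J₃ hJ₁sq hJ₂sq hJ₃sq R hskew hbianchi hcomm₁ hcomm₂ hcomm₃ e Ric hRic ρ₁ ρ₂
    ρ₃ hρ₁ hρ₂ hρ₃
end

section
/- Let V be a finite-dimensional real inner product space, let J be a linear isometry of V with J∘J = −id, and let T be a 3-form on V of type (1,2)+(2,1) with respect to J. Define the trilinear form C(X,Y,Z) = (1/2)T(X,JY,JZ) + (1/2)T(JX,Y,JZ). Then for any orthonormal basis (e_a) of V, ∑_{a,b,c} C(e_a,e_b,e_c)² = (1/3)·∑_{a,b,c} T(e_a,e_b,e_c)², i.e. the squared norm of the Chern torsion C equals one third of the squared norm of T (norms taken as full tensor contractions). -/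
/-!
By the type condition, `C = ½ (T - T(J·, J·, ·))`. Since `J` is orthogonal, `T(J·, J·, ·)` has
the same norm as `T`, so `|C|² = ½ |T|² - ½ ⟨T, T(J·, J·, ·)⟩`. Alternation makes the three
contractions `⟨T, T(J·, J·, ·)⟩`, `⟨T, T(J·, ·, J·)⟩`, `⟨T, T(·, J·, J·)⟩` equal, and contracting
the type condition with `T` shows that they add up to `|T|²`; hence each is `|T|² / 3`.
-/

open scoped RealInnerProductSpace

section TripleSum

variable {β ι : Type*} [AddCommMonoid β] [Fintype ι]

theorem Finset.sum_sum_sum_congr {f g : ι → ι → ι → β} (h : ∀ a b c, f a b c = g a b c) :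
    ∑ a, ∑ b, ∑ c, f a b c = ∑ a, ∑ b, ∑ c, g a b c := by
  simp only [h]

theorem Finset.sum_sum_sum_comm₂₃ (f : ι → ι → ι → β) :
    ∑ a, ∑ b, ∑ c, f a b c = ∑ a, ∑ b, ∑ c, f a c b :=
  Finset.sum_congr rfl fun _ _ => Finset.sum_comm

theorem Finset.sum_sum_sum_comm₁₃ (f : ι → ι → ι → β) :
    ∑ a, ∑ b, ∑ c, f a b c = ∑ a, ∑ b, ∑ c, f c b a := by
  rw [Finset.sum_comm, Finset.sum_sum_sum_comm₂₃, Finset.sum_comm]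

end TripleSum

section Isometry

variable {V : Type*} [NormedAddCommGroup V] [InnerProductSpace ℝ V] [FiniteDimensional ℝ V]
  {ι : Type*} [Fintype ι]

theorem OrthonormalBasis.sum_sq_apply (e : OrthonormalBasis ι ℝ V) (f : V →L[ℝ] ℝ) :
    ∑ a, f (e a) ^ 2 = ‖f‖ ^ 2 := by
  set u := (InnerProductSpace.toDual ℝ V).symm f
  have hu : ∀ x, f x = ⟪u, x⟫ := fun x => by simp [u]
  simp_rw [hu, e.sum_sq_inner_left, u, LinearIsometryEquiv.norm_map]

theorem OrthonormalBasis.sum_sq_apply_map_of_inner_map_map (e : OrthonormalBasis ι ℝ V)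
    (J : V →ₗ[ℝ] V) (hJ : ∀ X Y : V, ⟪J X, J Y⟫ = ⟪X, Y⟫) (f : V →ₗ[ℝ] ℝ) :
    ∑ a, f (J (e a)) ^ 2 = ∑ a, f (e a) ^ 2 := by
  let Jₑ : V ≃ₗᵢ[ℝ] V := (J.isometryOfInner hJ).toLinearIsometryEquiv rfl
  have h := (e.map Jₑ).sum_sq_apply (LinearMap.toContinuousLinearMap f)
  rw [← e.sum_sq_apply (LinearMap.toContinuousLinearMap f)] at h
  simpa [Jₑ] using h

theorem OrthonormalBasis.sum_sq_trilinear_map_map_of_inner_map_map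
    (e : OrthonormalBasis ι ℝ V) (J : V →ₗ[ℝ] V) (hJ : ∀ X Y : V, ⟪J X, J Y⟫ = ⟪X, Y⟫)
    (T : V →ₗ[ℝ] V →ₗ[ℝ] V →ₗ[ℝ] ℝ) :
    ∑ a, ∑ b, ∑ c, T (J (e a)) (J (e b)) (e c) ^ 2 =
      ∑ a, ∑ b, ∑ c, T (e a) (e b) (e c) ^ 2 := by
  have slot₂ : ∀ X, ∑ b, ∑ c, T X (J (e b)) (e c) ^ 2 = ∑ b, ∑ c, T X (e b) (e c) ^ 2 :=
    fun X => Finset.sum_comm.trans <| (Finset.sum_congr rfl fun c _ =>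
      e.sum_sq_apply_map_of_inner_map_map J hJ ((T X).flip (e c))).trans Finset.sum_comm
  simp_rw [slot₂]
  rw [Finset.sum_sum_sum_comm₁₃, Finset.sum_sum_sum_comm₁₃ (fun a b c => T (e a) (e b) (e c) ^ 2)]
  exact Finset.sum_congr rfl fun c _ => Finset.sum_congr rfl fun b _ =>
    e.sum_sq_apply_map_of_inner_map_map J hJ ((T.flip (e b)).flip (e c))

end Isometry

theorem sum_mul_apply_map_map_eq_third_sum_sq {V ι : Type*} [Fintype ι]
    (T : V → V → V → ℝ) (J : V → V)
    (halt₁ : ∀ X Y Z : V, T X Y Z = -(T Y X Z)) (halt₂ : ∀ X Y Z : V, T X Y Z = -(T X Z Y))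
    (htype : ∀ X Y Z : V,
      T X Y Z - T (J X) (J Y) Z - T (J X) Y (J Z) - T X (J Y) (J Z) = 0)
    (e : ι → V) :
    ∑ a, ∑ b, ∑ c, T (e a) (e b) (e c) * T (J (e a)) (J (e b)) (e c) =
      (1 / 3 : ℝ) * ∑ a, ∑ b, ∑ c, T (e a) (e b) (e c) ^ 2 := by
  have halt₁₃ : ∀ X Y Z : V, T X Y Z = -(T Z Y X) := fun X Y Z => by
    rw [halt₁, halt₂, halt₁, neg_neg]
  have h₂₃ : ∑ a, ∑ b, ∑ c, T (e a) (e b) (e c) * T (J (e a)) (e b) (J (e c)) =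
      ∑ a, ∑ b, ∑ c, T (e a) (e b) (e c) * T (J (e a)) (J (e b)) (e c) :=
    (Finset.sum_sum_sum_comm₂₃ _).trans <| Finset.sum_sum_sum_congr fun a b c => by
      rw [halt₂ (e a), halt₂ (J (e a)), neg_mul_neg]
  have h₁₃ : ∑ a, ∑ b, ∑ c, T (e a) (e b) (e c) * T (e a) (J (e b)) (J (e c)) =
      ∑ a, ∑ b, ∑ c, T (e a) (e b) (e c) * T (J (e a)) (J (e b)) (e c) :=
    (Finset.sum_sum_sum_comm₁₃ _).trans <| Finset.sum_sum_sum_congr fun a b c => by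
      rw [halt₁₃ (e c), halt₁₃ (e c) (J (e b)), neg_mul_neg]
  have hsplit : ∑ a, ∑ b, ∑ c, T (e a) (e b) (e c) ^ 2 =
      ∑ a, ∑ b, ∑ c, T (e a) (e b) (e c) * T (J (e a)) (J (e b)) (e c) +
      ∑ a, ∑ b, ∑ c, T (e a) (e b) (e c) * T (J (e a)) (e b) (J (e c)) +
      ∑ a, ∑ b, ∑ c, T (e a) (e b) (e c) * T (e a) (J (e b)) (J (e c)) := by
    simp only [← Finset.sum_add_distrib]
    exact Finset.sum_sum_sum_congr fun a b c => by
      linear_combination T (e a) (e b) (e c) * htype (e a) (e b) (e c)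
  rw [h₂₃, h₁₃] at hsplit
  linarith

theorem stmt_11_general
    {V : Type*} [NormedAddCommGroup V] [InnerProductSpace ℝ V]
    [FiniteDimensional ℝ V]
    (J : V →ₗ[ℝ] V)
    (hJiso : ∀ X Y : V, ⟪J X, J Y⟫ = ⟪X, Y⟫)
    (T : V →ₗ[ℝ] V →ₗ[ℝ] V →ₗ[ℝ] ℝ)
    (halt₁ : ∀ X Y Z : V, T X Y Z = -(T Y X Z))
    (halt₂ : ∀ X Y Z : V, T X Y Z = -(T X Z Y))
    (htype : ∀ X Y Z : V,
      T X Y Z - T (J X) (J Y) Z - T (J X) Y (J Z) - T X (J Y) (J Z) = 0)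
    (C : V → V → V → ℝ)
    (hC : ∀ X Y Z : V,
      C X Y Z = (1 / 2 : ℝ) * T X (J Y) (J Z) + (1 / 2 : ℝ) * T (J X) Y (J Z))
    {ι : Type*} [Fintype ι]
    (e : OrthonormalBasis ι ℝ V) :
    ∑ a, ∑ b, ∑ c, (C (e a) (e b) (e c)) ^ 2 =
      (1 / 3 : ℝ) * ∑ a, ∑ b, ∑ c, (T (e a) (e b) (e c)) ^ 2 := by
  have hC' : ∀ X Y Z : V, C X Y Z = (1 / 2 : ℝ) * (T X Y Z - T (J X) (J Y) Z) := by
    intro X Y Z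
    linear_combination hC X Y Z - (1 / 2 : ℝ) * htype X Y Z
  calc ∑ a, ∑ b, ∑ c, (C (e a) (e b) (e c)) ^ 2
      = ∑ a, ∑ b, ∑ c, ((1 / 4 : ℝ) * T (e a) (e b) (e c) ^ 2
          + (1 / 4 : ℝ) * T (J (e a)) (J (e b)) (e c) ^ 2
          - (1 / 2 : ℝ) * (T (e a) (e b) (e c) * T (J (e a)) (J (e b)) (e c))) :=
        Finset.sum_sum_sum_congr fun a b c => by rw [hC']; ring
    _ = (1 / 4 : ℝ) * ∑ a, ∑ b, ∑ c, T (e a) (e b) (e c) ^ 2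
          + (1 / 4 : ℝ) * ∑ a, ∑ b, ∑ c, T (J (e a)) (J (e b)) (e c) ^ 2
          - (1 / 2 : ℝ) * ∑ a, ∑ b, ∑ c, T (e a) (e b) (e c) * T (J (e a)) (J (e b)) (e c) := by
        simp only [Finset.sum_add_distrib, Finset.sum_sub_distrib, Finset.mul_sum]
    _ = (1 / 3 : ℝ) * ∑ a, ∑ b, ∑ c, (T (e a) (e b) (e c)) ^ 2 := by
        rw [e.sum_sq_trilinear_map_map_of_inner_map_map J hJiso T,
          sum_mul_apply_map_map_eq_third_sum_sq (fun X Y Z => T X Y Z) J halt₁ halt₂ htype e]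
        ring

theorem stmt_11
    {V : Type*} [NormedAddCommGroup V] [InnerProductSpace ℝ V]
    [FiniteDimensional ℝ V]
    (J : V →ₗ[ℝ] V)
    (hJiso : ∀ X Y : V, ⟪J X, J Y⟫ = ⟪X, Y⟫)
    (hJsq : ∀ X : V, J (J X) = -X)
    (T : V →ₗ[ℝ] V →ₗ[ℝ] V →ₗ[ℝ] ℝ)
    (halt₁ : ∀ X Y Z : V, T X Y Z = -(T Y X Z))
    (halt₂ : ∀ X Y Z : V, T X Y Z = -(T X Z Y))
    (htype : ∀ X Y Z : V,
      T X Y Z - T (J X) (J Y) Z - T (J X) Y (J Z) - T X (J Y) (J Z) = 0)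
    (C : V → V → V → ℝ)
    (hC : ∀ X Y Z : V,
      C X Y Z = (1 / 2 : ℝ) * T X (J Y) (J Z) + (1 / 2 : ℝ) * T (J X) Y (J Z))
    {ι : Type*} [Fintype ι]
    (e : OrthonormalBasis ι ℝ V) :
    ∑ a, ∑ b, ∑ c, (C (e a) (e b) (e c)) ^ 2 =
      (1 / 3 : ℝ) * ∑ a, ∑ b, ∑ c, (T (e a) (e b) (e c)) ^ 2 :=
  stmt_11_general J hJiso T halt₁ halt₂ htype C hC e
end

section
/- Let V be a finite-dimensional real inner product space, let J be a linear isometry of V with J∘J = −id, and let T be a 3-form on V of type (1,2)+(2,1) with respect to J. Then for any orthonormal basis (e_a) of V, ∑_{a,b,c} T(e_a,e_b,e_c)·T(Je_a,Je_b,e_c) = (1/3)·∑_{a,b,c} T(e_a,e_b,e_c)². -/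
/-!
Multiplying the type condition by `T(X,Y,Z)` writes `T(X,Y,Z)²` as the sum of the three
contractions `T(X,Y,Z)·T(JX,JY,Z)`, `T(X,Y,Z)·T(JX,Y,JZ)` and `T(X,Y,Z)·T(X,JY,JZ)`. Summed over
a basis, the last two equal the first after relabelling the indices, by the antisymmetry of `T`,
so the sum of squares is three times the first contraction.
-/

section TrilinearContraction

variable {V R ι : Type*} [CommRing R] [Fintype ι] (T : V → V → V → R) (J : V → V) (v : ι → V)

theorem sum_mul_map₁₃_eq_sum_mul_map₁₂ (halt : ∀ X Y Z, T X Y Z = -T X Z Y) :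
    ∑ a, ∑ b, ∑ c, T (v a) (v b) (v c) * T (J (v a)) (v b) (J (v c)) =
      ∑ a, ∑ b, ∑ c, T (v a) (v b) (v c) * T (J (v a)) (J (v b)) (v c) := by
  refine Finset.sum_congr rfl fun a _ => ?_
  rw [Finset.sum_comm]
  refine Finset.sum_congr rfl fun b _ => Finset.sum_congr rfl fun c _ => ?_
  rw [halt (v a) (v c), halt (J (v a)) (v c)]
  ring

theorem sum_mul_map₂₃_eq_sum_mul_map₁₂ (halt₁ : ∀ X Y Z, T X Y Z = -T Y X Z)
    (halt₂ : ∀ X Y Z, T X Y Z = -T X Z Y) :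
    ∑ a, ∑ b, ∑ c, T (v a) (v b) (v c) * T (v a) (J (v b)) (J (v c)) =
      ∑ a, ∑ b, ∑ c, T (v a) (v b) (v c) * T (J (v a)) (J (v b)) (v c) := by
  have hcycle : ∀ X Y Z, T X Y Z = T Y Z X := fun X Y Z => by
    rw [halt₁, halt₂, neg_neg]
  calc ∑ a, ∑ b, ∑ c, T (v a) (v b) (v c) * T (v a) (J (v b)) (J (v c))
      = ∑ a, ∑ b, ∑ c, T (v b) (v c) (v a) * T (J (v b)) (J (v c)) (v a) := by
        simp only [← hcycle]
    _ = ∑ b, ∑ c, ∑ a, T (v b) (v c) (v a) * T (J (v b)) (J (v c)) (v a) := by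
        rw [Finset.sum_comm]
        exact Finset.sum_congr rfl fun b _ => Finset.sum_comm

end TrilinearContraction

open scoped RealInnerProductSpace

theorem stmt_12_general
    {V : Type*} [NormedAddCommGroup V] [InnerProductSpace ℝ V]
    (J : V →ₗ[ℝ] V)
    (T : V →ₗ[ℝ] V →ₗ[ℝ] V →ₗ[ℝ] ℝ)
    (halt₁ : ∀ X Y Z : V, T X Y Z = -(T Y X Z))
    (halt₂ : ∀ X Y Z : V, T X Y Z = -(T X Z Y))
    (htype : ∀ X Y Z : V,
      T X Y Z - T (J X) (J Y) Z - T (J X) Y (J Z) - T X (J Y) (J Z) = 0)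
    {ι : Type*} [Fintype ι]
    (e : OrthonormalBasis ι ℝ V) :
    ∑ a, ∑ b, ∑ c, T (e a) (e b) (e c) * T (J (e a)) (J (e b)) (e c) =
      (1 / 3 : ℝ) * ∑ a, ∑ b, ∑ c, (T (e a) (e b) (e c)) ^ 2 := by
  have hsq : ∀ X Y Z : V, T X Y Z ^ 2 =
      T X Y Z * T (J X) (J Y) Z + T X Y Z * T (J X) Y (J Z) + T X Y Z * T X (J Y) (J Z) :=
    fun X Y Z => by linear_combination T X Y Z * htype X Y Z
  simp only [hsq, Finset.sum_add_distrib,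
    sum_mul_map₁₃_eq_sum_mul_map₁₂ (T · · ·) J e halt₂,
    sum_mul_map₂₃_eq_sum_mul_map₁₂ (T · · ·) J e halt₁ halt₂]
  ring

theorem stmt_12
    {V : Type*} [NormedAddCommGroup V] [InnerProductSpace ℝ V]
    [FiniteDimensional ℝ V]
    (J : V →ₗ[ℝ] V)
    (hJiso : ∀ X Y : V, ⟪J X, J Y⟫ = ⟪X, Y⟫)
    (hJsq : ∀ X : V, J (J X) = -X)
    (T : V →ₗ[ℝ] V →ₗ[ℝ] V →ₗ[ℝ] ℝ)
    (halt₁ : ∀ X Y Z : V, T X Y Z = -(T Y X Z))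
    (halt₂ : ∀ X Y Z : V, T X Y Z = -(T X Z Y))
    (htype : ∀ X Y Z : V,
      T X Y Z - T (J X) (J Y) Z - T (J X) Y (J Z) - T X (J Y) (J Z) = 0)
    {ι : Type*} [Fintype ι]
    (e : OrthonormalBasis ι ℝ V) :
    ∑ a, ∑ b, ∑ c, T (e a) (e b) (e c) * T (J (e a)) (J (e b)) (e c) =
      (1 / 3 : ℝ) * ∑ a, ∑ b, ∑ c, (T (e a) (e b) (e c)) ^ 2 :=
  stmt_12_general J T halt₁ halt₂ htype e
end
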